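/- Every tailed derivation of 𝔰𝔩_2(ℂ) is an inner derivation; in particular TDer(𝔰𝔩_2(ℂ)) = Der(𝔰𝔩_2(ℂ)) is three-dimensional. -/

import Mathlib

/-!
Applying a tailed derivation `(D, d)` to the Jacobi identity, every term involving `D` cancels
against the Jacobi identities with `D` inserted in one slot, leaving an identity in the tail `d`
alone. On the standard triple `h, e, f` of `𝔰𝔩₂` that identity reads `2 d(h) h + 4 d(f) e +
4 d(e) f = 0`, so `d = 0` and `D` is an ordinary derivation. Since `𝔰𝔩₂` has no nonzero abelian
ideals, Cartan's criterion makes its Killing form nondegenerate, so every derivation is inner,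
and `ad` is an isomorphism onto the derivations, which are therefore three-dimensional.
-/

open LieAlgebra LieAlgebra.SpecialLinear

section TailedDerivation

variable {R L : Type*} [CommRing R] [LieRing L] [LieAlgebra R L]

def IsTailedDerivation (D : L →ₗ[R] L) (d : L →ₗ[R] R) : Prop :=
  ∀ y z : L, D ⁅y, z⁆ = ⁅D y, z⁆ + ⁅y, D z⁆ + d z • y - d y • z

namespace IsTailedDerivation

variable {D : L →ₗ[R] L} {d : L →ₗ[R] R}

/-- The `D`-terms cancel by the Jacobi identities for `(D x, y, z)`, `(x, D y, z)` and
`(x, y, D z)`. -/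
theorem tail_cyclic (hD : IsTailedDerivation D d) (x y z : L) :
    d ⁅y, z⁆ • x + d ⁅z, x⁆ • y + d ⁅x, y⁆ • z +
      (d x • ⁅y, z⁆ + d y • ⁅z, x⁆ + d z • ⁅x, y⁆) = 0 := by
  have hJ : D ⁅x, ⁅y, z⁆⁆ + D ⁅y, ⁅z, x⁆⁆ + D ⁅z, ⁅x, y⁆⁆ = 0 := by
    rw [← map_add, ← map_add, lie_jacobi, map_zero]
  have hx := congrArg (⁅x, ·⁆) (hD y z)
  have hy := congrArg (⁅y, ·⁆) (hD z x)
  have hz := congrArg (⁅z, ·⁆) (hD x y)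
  simp only [lie_add, lie_sub, lie_smul] at hx hy hz
  rw [← lie_skew x z] at hx
  rw [← lie_skew y x] at hy
  rw [← lie_skew z y] at hz
  linear_combination (norm := module) hJ - hD x ⁅y, z⁆ - hD y ⁅z, x⁆ - hD z ⁅x, y⁆ - hx - hy - hz -
    lie_jacobi (D x) y z - lie_jacobi x (D y) z - lie_jacobi x y (D z)

def toLieDerivation (hD : IsTailedDerivation D d) (hd : d = 0) : LieDerivation R L L where
  __ := D
  leibniz' y z := by
    rw [hD y z, hd, ← lie_skew z]
    simp only [LinearMap.zero_apply, zero_smul, add_zero, sub_zero]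
    abel

@[simp]
theorem toLieDerivation_apply (hD : IsTailedDerivation D d) (hd : d = 0) (x : L) :
    hD.toLieDerivation hd x = D x :=
  rfl

end IsTailedDerivation

end TailedDerivation

theorem LieDerivation.IsKilling.finrank_eq {K L : Type*} [Field K] [LieRing L] [LieAlgebra K L]
    [Module.Finite K L] [IsKilling K L] :
    Module.finrank K (LieDerivation K L L) = Module.finrank K L :=
  (LinearEquiv.ofBijective (LieDerivation.ad K L).toLinearMap
    ⟨injective_ad_of_center_eq_bot (by simp), fun D => exists_eq_ad D⟩).finrank_eq.symm

namespace LieAlgebra.SpecialLinear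

theorem finrank_sl (n K : Type*) [Fintype n] [DecidableEq n] [Nonempty n] [Field K] :
    Module.finrank K (sl n K) = Fintype.card n ^ 2 - 1 := by
  have h := LinearMap.finrank_range_add_finrank_ker (Matrix.traceLinearMap n K K)
  rw [LinearMap.range_eq_top.mpr (Matrix.trace_surjective (R := K)), finrank_top,
    Module.finrank_self, Module.finrank_matrix, Module.finrank_self] at h
  change Module.finrank K (LinearMap.ker (Matrix.traceLinearMap n K K)) = _
  rw [sq]; omega

namespace SlTwo

variable {K : Type*} [Field K]

def e : sl (Fin 2) K := ⟨!![0, 1; 0, 0], by simp [sl, Matrix.trace_fin_two]⟩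
def f : sl (Fin 2) K := ⟨!![0, 0; 1, 0], by simp [sl, Matrix.trace_fin_two]⟩
def h : sl (Fin 2) K := ⟨!![1, 0; 0, -1], by simp [sl, Matrix.trace_fin_two]⟩

@[simp] theorem val_e : (e : sl (Fin 2) K).val = !![0, 1; 0, 0] := rfl
@[simp] theorem val_f : (f : sl (Fin 2) K).val = !![0, 0; 1, 0] := rfl
@[simp] theorem val_h : (h : sl (Fin 2) K).val = !![1, 0; 0, -1] := rfl

theorem val_one_one (x : sl (Fin 2) K) : x.val 1 1 = -x.val 0 0 := by
  have : x.val.trace = 0 := x.2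
  rw [Matrix.trace_fin_two] at this
  linear_combination this

theorem ext {x y : sl (Fin 2) K} (h00 : x.val 0 0 = y.val 0 0) (h01 : x.val 0 1 = y.val 0 1)
    (h10 : x.val 1 0 = y.val 1 0) : x = y := by
  ext i j
  fin_cases i <;> fin_cases j
  · exact h00
  · exact h01
  · exact h10
  · simp [val_one_one x, val_one_one y, h00]

theorem eq_smul_e_add_smul_f_add_smul_h (x : sl (Fin 2) K) :
    x = x.val 0 1 • e + x.val 1 0 • f + x.val 0 0 • h := by
  apply ext <;> simp

theorem isSl2Triple : IsSl2Triple (h : sl (Fin 2) K) e f where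
  h_ne_zero := by
    intro h0
    simpa using congrArg (fun x : sl (Fin 2) K => x.val 0 0) h0
  lie_e_f := by ext i j; fin_cases i <;> fin_cases j <;> simp [Ring.lie_def]
  lie_h_e_nsmul := by ext i j; fin_cases i <;> fin_cases j <;> norm_num [Ring.lie_def]
  lie_h_f_nsmul := by ext i j; fin_cases i <;> fin_cases j <;> norm_num [Ring.lie_def]

/-- An element `x` of an abelian ideal commutes with `⁅e, x⁆` and `⁅f, x⁆`; the entries of these
brackets are `2 x₁₀²`, `2 x₀₁²` and `-4 x₀₀² - 2 x₀₁ x₁₀`. -/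
instance instHasTrivialRadical [NeZero (2 : K)] : HasTrivialRadical K (sl (Fin 2) K) := by
  rw [hasTrivialRadical_iff_no_abelian_ideals]
  intro I hI
  rw [eq_bot_iff]
  intro x hx
  have hcomm : ∀ y ∈ I, ⁅x, y⁆ = 0 := fun y hy =>
    congrArg Subtype.val (trivial_lie_zero I I ⟨x, hx⟩ ⟨y, hy⟩)
  have he := congrArg (fun z : sl (Fin 2) K => z.val) (hcomm _ (I.lie_mem (x := e) hx))
  have hf := congrArg (fun z : sl (Fin 2) K => z.val) (hcomm _ (I.lie_mem (x := f) hx))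
  have he10 := congrFun (congrFun he 1) 0
  have he01 := congrFun (congrFun he 0) 1
  have hf01 := congrFun (congrFun hf 0) 1
  simp only [LieSubalgebra.coe_bracket, Ring.lie_def, Matrix.sub_apply, Matrix.mul_apply,
    Fin.sum_univ_two, val_e, val_f, val_one_one x, Matrix.of_apply, Matrix.cons_val',
    Matrix.cons_val_zero, Matrix.cons_val_one, Matrix.cons_val_fin_one, ZeroMemClass.coe_zero,
    Matrix.zero_apply] at he10 he01 hf01
  have hc : x.val 1 0 = 0 := by
    have : (2 : K) * x.val 1 0 ^ 2 = 0 := by linear_combination he10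
    simpa [two_ne_zero] using this
  have hb : x.val 0 1 = 0 := by
    have : (2 : K) * x.val 0 1 ^ 2 = 0 := by linear_combination hf01
    simpa [two_ne_zero] using this
  have ha : x.val 0 0 = 0 := by
    have : (2 : K) ^ 2 * x.val 0 0 ^ 2 = 0 := by linear_combination -he01 - 2 * x.val 0 1 * hc
    simpa [two_ne_zero] using this
  rw [LieSubmodule.mem_bot]
  exact ext (by simp [ha]) (by simp [hb]) (by simp [hc])

theorem _root_.IsTailedDerivation.tail_eq_zero_of_sl_two [NeZero (2 : K)]
    {D : sl (Fin 2) K →ₗ[K] sl (Fin 2) K} {d : sl (Fin 2) K →ₗ[K] K}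
    (hD : IsTailedDerivation D d) : d = 0 := by
  have hc := hD.tail_cyclic h e f
  rw [isSl2Triple.lie_e_f, ← lie_skew, isSl2Triple.lie_lie_smul_f K,
    isSl2Triple.lie_h_e_smul K] at hc
  have h00 := congrArg (fun z : sl (Fin 2) K => z.val 0 0) hc
  have h01 := congrArg (fun z : sl (Fin 2) K => z.val 0 1) hc
  have h10 := congrArg (fun z : sl (Fin 2) K => z.val 1 0) hc
  simp only [neg_neg, map_smul, smul_eq_mul, AddMemClass.coe_add, SetLike.val_smul,
    ZeroMemClass.coe_zero, Matrix.add_apply, Matrix.smul_apply, Matrix.zero_apply, val_e, val_f,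
    val_h, Matrix.of_apply, Matrix.cons_val', Matrix.cons_val_zero, Matrix.cons_val_one,
    Matrix.cons_val_fin_one] at h00 h01 h10
  have hh : d h = 0 := by
    simpa [two_ne_zero] using (by linear_combination h00 : 2 * d h = 0)
  have hf : d f = 0 := by
    simpa [two_ne_zero] using (by linear_combination h01 : 2 * (2 * d f) = 0)
  have he : d e = 0 := by
    simpa [two_ne_zero] using (by linear_combination h10 : 2 * (2 * d e) = 0)
  ext x
  rw [eq_smul_e_add_smul_f_add_smul_h x]
  simp [he, hf, hh]

end SlTwo
end LieAlgebra.SpecialLinear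

/-- every tailed derivation of `𝔰𝔩₂(ℂ)` is an inner derivation (and its
tail is zero); in particular `TDer(𝔰𝔩₂(ℂ)) = Der(𝔰𝔩₂(ℂ))` is three-dimensional. -/
theorem tailedDer_sl2_inner :
    (∀ (D : LieAlgebra.SpecialLinear.sl (Fin 2) ℂ →ₗ[ℂ]
            LieAlgebra.SpecialLinear.sl (Fin 2) ℂ)
       (d : LieAlgebra.SpecialLinear.sl (Fin 2) ℂ →ₗ[ℂ] ℂ),
      (∀ y z : LieAlgebra.SpecialLinear.sl (Fin 2) ℂ,
        D ⁅y, z⁆ = ⁅D y, z⁆ + ⁅y, D z⁆ + d z • y - d y • z) →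
      d = 0 ∧ ∃ w : LieAlgebra.SpecialLinear.sl (Fin 2) ℂ, ∀ y, D y = ⁅w, y⁆) ∧
    Module.finrank ℂ
      (LieDerivation ℂ (LieAlgebra.SpecialLinear.sl (Fin 2) ℂ)
        (LieAlgebra.SpecialLinear.sl (Fin 2) ℂ)) = 3 := by
  refine ⟨fun D d hD => ?_, ?_⟩
  · have hTD : IsTailedDerivation D d := hD
    have hd := hTD.tail_eq_zero_of_sl_two
    obtain ⟨w, hw⟩ := LieDerivation.IsKilling.exists_eq_ad (hTD.toLieDerivation hd)
    refine ⟨hd, w, fun y => ?_⟩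
    simpa using (LieDerivation.congr_fun hw y).symm
  · rw [LieDerivation.IsKilling.finrank_eq, finrank_sl]
    rfl
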